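/- arXiv:2211.00711 — 2 statements merged into one kernel-verified Lean document; each statement's English description precedes it below -/
import Mathlib

section
/- Let (R,σ) be an assignment for (G',v₀). If σ(v₀) = ⊥, then Player 2 has a winning strategy in the game 𝒢(G',v₀), i.e. the initial position v₀ is a loss for the player to move. -/
/-!
Setting: `G` is a finite simple graph on `V`, bipartite with bipartition `V₁, V₂`.
The graph `G'` is obtained from `G` by adding a new vertex `v₁` adjacent to every
vertex of `V₁`, and a new vertex `v₀` adjacent only to `v₁`.  The vertices of `G'`
are encoded by `Option (Option V)`: `none` is `v₀`, `some none` is `v₁`, and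
`some (some v)` is the vertex `v` of `G`.
-/

/-- The vertex set of `G'`. -/
abbrev Vext (V : Type) : Type := Option (Option V)

/-- The added vertex `v₀`. -/
def vzero {V : Type} : Vext V := none

/-- The added vertex `v₁`. -/
def vone {V : Type} : Vext V := some none

/-- The embedding of a vertex of `G` into `G'`. -/
def emb {V : Type} (v : V) : Vext V := some (some v)

/-- The graph `G'` obtained from `G` by adding `v₁` adjacent to every vertex of `V₁`
and `v₀` adjacent only to `v₁`. -/
def extGraph {V : Type} (G : SimpleGraph V) (V1 : Set V) : SimpleGraph (Vext V) where
  Adj x y :=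
    match x, y with
    | none, some none => True
    | some none, none => True
    | some none, some (some v) => v ∈ V1
    | some (some v), some none => v ∈ V1
    | some (some u), some (some v) => G.Adj u v
    | _, _ => False
  symm := by
    refine ⟨?_⟩
    rintro (_ | (_ | x)) (_ | (_ | y)) h <;>
      first
        | exact h
        | exact h.symm
        | exact h.elim
        | trivial
  loopless := by
    refine ⟨?_⟩
    rintro (_ | (_ | x)) h
    · exact h
    · exact h
    · exact G.loopless.irrefl x h

/-- `(R, σ)` is an assignment for `(G', x₀)`: here `σ x = none` encodes `σ(x) = ⊥`. -/
structure IsAssignment {W : Type} (G' : SimpleGraph W) (x0 : W) (R : Set W)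
    (σ : W → Option W) : Prop where
  /-- `x₀ ∈ R`. -/
  mem : x0 ∈ R
  /-- `(C₁)`: for `v ∈ R`, if `σ v = u ∈ V'` then `u` is adjacent to `v`, `u ∈ R` and
  `σ u = ⊥`. -/
  C1 : ∀ v ∈ R, ∀ u, σ v = some u → G'.Adj v u ∧ u ∈ R ∧ σ u = none
  /-- `(C₂)`: for `v ∈ R`, if `σ v = ⊥` then every neighbour `u` of `v` satisfies `u ∈ R`
  and `σ u ≠ ⊥`. -/
  C2 : ∀ v ∈ R, σ v = none → ∀ u, G'.Adj v u → u ∈ R ∧ σ u ≠ none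
  /-- `(C₃)`, first half: for `v ∈ R`, `|σ⁻¹(v)| ≤ 1`. -/
  C3 : ∀ v ∈ R, {w | σ w = some v}.Subsingleton
  /-- `(C₃)`, second half: `σ⁻¹(x₀) = ∅`. -/
  C3' : ∀ w, σ w ≠ some x0

/-- Auxiliary fuelled definition of the game value of the game `𝒢(G', v₀)`.  A position
consists of the current vertex `cur` together with the list `P` of previously visited
vertices (most recent first); the player to move must choose a vertex `v` not occurring
in the position, adjacent to `cur`; a position is a win for the player to move iff some
legal move leads to a loss for the player to move there.  The fuel is (an upper bound
on) the number of unused vertices, which decreases by one at each move, so that with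
fuel equal to the number of unused vertices this is exactly the well-founded definition
of the game value. -/
def winAux {W : Type} (G' : SimpleGraph W) : ℕ → List W → W → Prop
  | 0, _, _ => False
  | n + 1, P, cur => ∃ v, v ∉ cur :: P ∧ G'.Adj cur v ∧ ¬ winAux G' n (cur :: P) v

/-- The position of `𝒢(G', v₀)` with current vertex `cur` and previously visited
vertices `P` (most recent first) is a win for the player to move. -/
def WinPos {W : Type} [Fintype W] (G' : SimpleGraph W) (P : List W) (cur : W) : Prop :=
  winAux G' {w : W | w ∉ cur :: P}.ncard P cur

/-!
Player 2 answers each move to `v` with `σ v`. Inductively, the vertex `x` reached after an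
answer lies in `R` with `σ x = ⊥`, so by `(C₂)` every move `v` of Player 1 has `σ v = u`, and
by `(C₁)` the vertex `u` is adjacent to `v`, lies in `R` and has `σ u = ⊥`. The answer `u` is
unused because every visited `⊥`-vertex has its `σ`-preimage visited: `v₀` has no preimage,
and by `(C₃)` the only preimage of an answer `u` is the move `v` it answered.
-/

section

variable {W : Type} {G' : SimpleGraph W} {x0 : W} {R : Set W} {σ : W → Option W}

def PartnersVisited (σ : W → Option W) (Q : List W) : Prop :=
  ∀ x ∈ Q, σ x = none → ∀ w, σ w = some x → w ∈ Q

lemma PartnersVisited.cons_cons {Q : List W} {u v : W} (hQ : PartnersVisited σ Q)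
    (hvu : σ v = some u) (hu : ∀ w, σ w = some u → w = v) :
    PartnersVisited σ (u :: v :: Q) := by
  intro x hx hσx w hw
  rcases List.mem_cons.1 hx with rfl | hx
  · simp [hu w hw]
  rcases List.mem_cons.1 hx with rfl | hx
  · simp [hvu] at hσx
  · simp [hQ x hx hσx w hw]

lemma IsAssignment.partnersVisited_singleton (hA : IsAssignment G' x0 R σ) :
    PartnersVisited σ [x0] := by
  intro x hx _ w hw
  rw [List.mem_singleton.1 hx] at hw
  exact absurd hw (hA.C3' w)

lemma IsAssignment.exists_partner (hA : IsAssignment G' x0 R σ) {x v : W} (hx : x ∈ R)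
    (hσx : σ x = none) (hxv : G'.Adj x v) :
    ∃ u, σ v = some u ∧ G'.Adj v u ∧ u ∈ R ∧ σ u = none := by
  obtain ⟨hv, hσv⟩ := hA.C2 x hx hσx v hxv
  obtain ⟨u, hvu⟩ := Option.ne_none_iff_exists'.1 hσv
  exact ⟨u, hvu, hA.C1 v hv u hvu⟩

lemma ncard_notMem_cons_add_one [Finite W] {Q : List W} {v : W} (hv : v ∉ Q) :
    {w | w ∉ v :: Q}.ncard + 1 = {w | w ∉ Q}.ncard := by
  have hdiff : {w | w ∉ v :: Q} = {w | w ∉ Q} \ {v} := by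
    ext w
    simp [and_comm]
  rw [hdiff]
  exact Set.ncard_sdiff_singleton_add_one hv

theorem IsAssignment.not_winAux [Finite W] (hA : IsAssignment G' x0 R σ) {P : List W}
    {cur : W} (hcur : cur ∈ R) (hσcur : σ cur = none) (hP : PartnersVisited σ (cur :: P)) :
    ¬ winAux G' {w | w ∉ cur :: P}.ncard P cur := by
  intro hwin
  obtain ⟨k, hk⟩ : ∃ k, {w | w ∉ cur :: P}.ncard = k + 1 := by
    rcases hn : {w | w ∉ cur :: P}.ncard with _ | k
    · rw [hn] at hwin
      exact hwin.elim
    · exact ⟨k, rfl⟩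
  rw [hk] at hwin
  obtain ⟨v, hv, hadj, hv_loss⟩ := hwin
  obtain ⟨u, hvu, hadj', hu, hσu⟩ := hA.exists_partner hcur hσcur hadj
  have hu_new : u ∉ v :: cur :: P := by
    rintro (_ | ⟨_, hmem⟩)
    · simp [hvu] at hσu
    · exact hv (hP u hmem hσu v hvu)
  have hcount_v := ncard_notMem_cons_add_one hv
  have hcount_u := ncard_notMem_cons_add_one hu_new
  rw [hk] at hcount_v
  rw [show k = {w | w ∉ u :: v :: cur :: P}.ncard + 1 by omega] at hv_loss
  exact hv_loss ⟨u, hu_new, hadj', hA.not_winAux hu hσu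
    (hP.cons_cons hvu fun w hw => hA.C3 u hu hw hvu)⟩
termination_by {w | w ∉ cur :: P}.ncard
decreasing_by omega

end

theorem stmt1_general {V : Type} [Fintype V] (G : SimpleGraph V) (V1 : Set V)
    (R : Set (Vext V)) (σ : Vext V → Option (Vext V))
    (hA : IsAssignment (extGraph G V1) vzero R σ)
    (h : σ vzero = none) :
    ¬ WinPos (extGraph G V1) [] vzero :=
  hA.not_winAux hA.mem h hA.partnersVisited_singleton

/-- Let `(R, σ)` be an assignment for `(G', v₀)`.  If `σ(v₀) = ⊥`, then Player 2 has a
winning strategy in the game `𝒢(G', v₀)`, i.e. the initial position `v₀` is a loss for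
the player to move. -/
theorem stmt1 {V : Type} [Fintype V] (G : SimpleGraph V) (V1 V2 : Set V)
    (hcover : V1 ∪ V2 = Set.univ) (hdisj : Disjoint V1 V2)
    (hbip : ∀ ⦃u w : V⦄, G.Adj u w → (u ∈ V1 ∧ w ∈ V2) ∨ (u ∈ V2 ∧ w ∈ V1))
    (R : Set (Vext V)) (σ : Vext V → Option (Vext V))
    (hA : IsAssignment (extGraph G V1) vzero R σ)
    (h : σ vzero = none) :
    ¬ WinPos (extGraph G V1) [] vzero :=
  stmt1_general G V1 R σ hA h
end

section
/- Consider any finite execution of the transition system starting from the initial state and reaching, after s steps, the state (P^s, R^s, σ^s, τ^s); let Q^s = R^s − V(P^s). Then: (a) P^s = v₀ v₁ … v_k is a path in G' with V(P^s) ⊆ R^s; (b) the tuple (σ^s, τ^s) is valid for (Q^s, R^s); (c) for every v ∈ Q^s, if σ^s(v) = u ∈ V' then u ∈ N_{G'}(v) ∩ Q^s and σ^s(u) = ⊥; (d) for every v ∈ Q^s, if σ^s(v) = ⊥ then every u ∈ N_{G'}(v) − V(P^s) satisfies u ∈ Q^s and σ^s(u) ≠ ⊥. -/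
/-!
The transition system underlying Algorithm 1.  A state consists of the current path
`P` (stored as a list in *reverse* order, so that the head of the list is the last
vertex `v_k` of the path), the set `R` of reached vertices, and the two maps
`σ, τ : V' → V' ∪ {⊥}` (with `⊥` encoded by `none`).
-/

/-- A state of the transition system. -/
structure AlgState (W : Type) where
  /-- The current path `v₀ v₁ … v_k`, stored in reverse order (head `= v_k`). -/
  P : List W
  /-- The set of reached vertices. -/
  R : Set W
  /-- The map `σ`. -/
  σ : W → Option W
  /-- The map `τ`. -/
  τ : W → Option W

/-- The initial state: `P = x₀ x₁`, `R = {x₀, x₁}`, `σ ≡ ⊥`, `τ ≡ ⊥`. -/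
def initState {W : Type} (x0 x1 : W) : AlgState W :=
  ⟨[x1, x0], {x0, x1}, fun _ => none, fun _ => none⟩

/-- The labelled transition relation of the system, for a graph `G'`.  Steps are only
possible from states whose path `P = v₀ v₁ … v_k` has `k ≥ 1` (at least two vertices).
With `Z = { u ∈ V' − V(P) : u v_k ∈ E', σ(u) = ⊥ }`: if `Z = ∅`, the step is a
*deletion* of the pair `(v_{k−1}, v_k)` (label `(v_{k−1}, some v_k)`); if `Z ≠ ∅`, the
step chooses `z ∈ Z` and is an *introduction* of the pair `(z, w)` where `w = τ(z)`
(label `(z, τ z)`). -/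
inductive LStep {W : Type} [DecidableEq W] (G' : SimpleGraph W) :
    W × Option W → AlgState W → AlgState W → Prop
  | del (vk vk1 : W) (rest : List W) (R : Set W) (σ τ : W → Option W)
      (hZ : ∀ u, u ∉ vk :: vk1 :: rest → G'.Adj u vk → σ u ≠ none) :
      LStep G' (vk1, some vk)
        ⟨vk :: vk1 :: rest, R, σ, τ⟩
        ⟨rest, R,
          Function.update (Function.update σ vk1 (some vk)) vk none,
          Function.update (Function.update τ vk (some vk1)) vk1 none⟩
  | intro_bot (vk : W) (rest : List W) (R : Set W) (σ τ : W → Option W) (z : W)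
      (hrest : rest ≠ [])
      (hz : z ∉ vk :: rest) (hadj : G'.Adj z vk) (hσ : σ z = none) (hτ : τ z = none) :
      LStep G' (z, none)
        ⟨vk :: rest, R, σ, τ⟩
        ⟨z :: vk :: rest, insert z R, σ, τ⟩
  | intro_pair (vk : W) (rest : List W) (R : Set W) (σ τ : W → Option W) (z w : W)
      (hrest : rest ≠ [])
      (hz : z ∉ vk :: rest) (hadj : G'.Adj z vk) (hσ : σ z = none) (hτ : τ z = some w) :
      LStep G' (z, some w)
        ⟨vk :: rest, R, σ, τ⟩
        ⟨w :: z :: vk :: rest, insert z R, σ, τ⟩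

/-- The (unlabelled) transition relation. -/
def Step {W : Type} [DecidableEq W] (G' : SimpleGraph W) (s s' : AlgState W) : Prop :=
  ∃ l, LStep G' l s s'

/-- `{u, v}` is a match of the tuple `t = (σ, τ)`. -/
def IsMatchPair {W : Type} (σ τ : W → Option W) (u v : W) : Prop :=
  σ u = some v ∧ τ u = none ∧ σ v = none ∧ τ v = some u

/-- The tuple `t = (σ, τ)` is valid for `(Q, R)`: (1) every `u` with `σ(u) ≠ ⊥` or
`τ(u) ≠ ⊥` belongs to `R`; (2) `Q` is a union of pairwise disjoint matches of `t`. -/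
def ValidTuple {W : Type} (σ τ : W → Option W) (Q R : Set W) : Prop :=
  (∀ u, (σ u ≠ none ∨ τ u ≠ none) → u ∈ R) ∧
  ∃ pairs : Set (W × W),
    (∀ p ∈ pairs, IsMatchPair σ τ p.1 p.2) ∧
    pairs.PairwiseDisjoint (fun p => ({p.1, p.2} : Set W)) ∧
    Q = ⋃ p ∈ pairs, ({p.1, p.2} : Set W)

/-- The deletion/introduction pair recorded by the label `l` contains the vertex `v`. -/
def PairContains {W : Type} (l : W × Option W) (v : W) : Prop :=
  l.1 = v ∨ l.2 = some v

/-!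
The four properties are an invariant of every transition. A match is determined by either of
its endpoints (`σ` names the partner of the first one, `τ` that of the second), so any family
of matches is pairwise disjoint and (b) only asks that every vertex of `Q` have a match partner
in `Q`. An introduction of `(z, ⊥)` leaves `Q` unchanged, since the unmatched vertex `z` cannot
lie in `Q`; an introduction of `(z, w)` removes exactly the match `{w, z}` from `Q`. A deletion
of `(v_{k−1}, v_k)` adds the fresh match `{v_{k−1}, v_k}` to `Q`, and (d) survives it because
`Z = ∅` says that every neighbour of `v_k` outside `P` already has `σ ≠ ⊥`.
-/

namespace AlgState

variable {W : Type}

/-- The set `Q = R − V(P)` of the paper. -/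
def settled (S : AlgState W) : Set W := S.R \ {x | x ∈ S.P}

@[simp]
lemma mem_settled {S : AlgState W} {x : W} : x ∈ S.settled ↔ x ∈ S.R ∧ x ∉ S.P := Iff.rfl

end AlgState

section Matches

variable {W : Type} {σ τ σ' τ' : W → Option W} {u v x : W}

def IsMatched (σ τ : W → Option W) (u v : W) : Prop :=
  IsMatchPair σ τ u v ∨ IsMatchPair σ τ v u

lemma IsMatched.symm (h : IsMatched σ τ u v) : IsMatched σ τ v u := Or.symm h

lemma IsMatched.eq_of_sigma_eq_some (h : IsMatched σ τ u v) (hu : σ u = some x) : v = x := by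
  rcases h with h | h
  · exact Option.some_injective _ (h.1.symm.trans hu)
  · exact absurd (h.2.2.1.symm.trans hu) (by simp)

lemma IsMatched.eq_of_tau_eq_some (h : IsMatched σ τ u v) (hu : τ u = some x) : v = x := by
  rcases h with h | h
  · exact absurd (h.2.1.symm.trans hu) (by simp)
  · exact Option.some_injective _ (h.2.2.2.symm.trans hu)

lemma IsMatched.unique {v' : W} (h : IsMatched σ τ u v) (h' : IsMatched σ τ u v') : v = v' := by
  rcases h with h | h
  · exact (h'.eq_of_sigma_eq_some h.1).symm
  · exact (h'.eq_of_tau_eq_some h.2.2.2).symm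

lemma not_isMatched_of_eq_none (hσ : σ u = none) (hτ : τ u = none) : ¬ IsMatched σ τ u v := by
  rintro (h | h)
  · simp [IsMatchPair, hσ] at h
  · simp [IsMatchPair, hτ] at h

lemma IsMatched.sigma_eq_some (h : IsMatched σ τ u v) (hv : σ v = none) : σ u = some v := by
  rcases h with h | h
  · exact h.1
  · exact absurd (h.1.symm.trans hv) (by simp)

lemma IsMatched.congr (h : IsMatched σ τ u v) (hσu : σ' u = σ u) (hσv : σ' v = σ v)
    (hτu : τ' u = τ u) (hτv : τ' v = τ v) : IsMatched σ' τ' u v := by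
  simpa only [IsMatched, IsMatchPair, hσu, hσv, hτu, hτv] using h

lemma pairwiseDisjoint_matchPairs :
    {p : W × W | IsMatchPair σ τ p.1 p.2}.PairwiseDisjoint (fun p => ({p.1, p.2} : Set W)) := by
  rintro ⟨a, b⟩ hab ⟨c, d⟩ hcd hne
  refine Set.disjoint_left.mpr fun x hx hx' => hne ?_
  obtain ⟨hσa, hτa, -, hτb⟩ := hab
  obtain ⟨hσc, hτc, -, hτd⟩ := hcd
  rcases hx with rfl | rfl <;> rcases hx' with rfl | rfl <;> simp_all

lemma validTuple_of_forall_isMatched {Q R : Set W}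
    (hR : ∀ u, (σ u ≠ none ∨ τ u ≠ none) → u ∈ R)
    (hQ : ∀ u ∈ Q, ∃ v ∈ Q, IsMatched σ τ u v) : ValidTuple σ τ Q R := by
  refine ⟨hR, {p | IsMatchPair σ τ p.1 p.2 ∧ p.1 ∈ Q ∧ p.2 ∈ Q}, fun p hp => hp.1,
    pairwiseDisjoint_matchPairs.subset fun p hp => hp.1, ?_⟩
  ext x
  simp only [Set.mem_iUnion, Set.mem_insert_iff, Set.mem_singleton_iff, Set.mem_ofPred_eq,
    exists_prop, Prod.exists]
  constructor
  · intro hx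
    obtain ⟨y, hy, hxy | hyx⟩ := hQ x hx
    · exact ⟨x, y, ⟨hxy, hx, hy⟩, Or.inl rfl⟩
    · exact ⟨y, x, ⟨hyx, hy, hx⟩, Or.inr rfl⟩
  · rintro ⟨a, b, ⟨-, ha, hb⟩, rfl | rfl⟩
    · exact ha
    · exact hb

end Matches

namespace AlgState

variable {W : Type}

structure Invariant (G' : SimpleGraph W) (S : AlgState W) : Prop where
  isChain : S.P.IsChain G'.Adj
  nodup : S.P.Nodup
  path_subset : ∀ x ∈ S.P, x ∈ S.R
  support_subset : ∀ u, (S.σ u ≠ none ∨ S.τ u ≠ none) → u ∈ S.R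
  exists_isMatched : ∀ u ∈ S.settled, ∃ v ∈ S.settled, IsMatched S.σ S.τ u v
  sigma_eq_some : ∀ v ∈ S.settled, ∀ u, S.σ v = some u →
    G'.Adj v u ∧ u ∈ S.settled ∧ S.σ u = none
  sigma_eq_none : ∀ v ∈ S.settled, S.σ v = none →
    ∀ u, G'.Adj v u → u ∉ S.P → u ∈ S.settled ∧ S.σ u ≠ none

variable {G' : SimpleGraph W}

lemma invariant_initState {x0 x1 : W} (h : G'.Adj x1 x0) : Invariant G' (initState x0 x1) := by
  have hsettled : (initState x0 x1).settled = ∅ := by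
    ext x
    simp only [initState, mem_settled, Set.mem_insert_iff, Set.mem_singleton_iff, List.mem_cons,
      List.not_mem_nil, Set.mem_empty_iff_false]
    tauto
  refine ⟨List.isChain_pair.mpr h, by simp [initState, h.ne], by simp [initState],
    by simp [initState], ?_, ?_, ?_⟩ <;> simp [hsettled]

lemma Invariant.introBot {vk z : W} {rest : List W} {R : Set W} {σ τ : W → Option W}
    (h : Invariant G' ⟨vk :: rest, R, σ, τ⟩) (hz : z ∉ vk :: rest) (hadj : G'.Adj z vk)
    (hσ : σ z = none) (hτ : τ z = none) :
    Invariant G' ⟨z :: vk :: rest, insert z R, σ, τ⟩ := by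
  have hzR : z ∉ R := fun hzR => by
    obtain ⟨v, -, hzv⟩ := h.exists_isMatched z ⟨hzR, hz⟩
    exact not_isMatched_of_eq_none hσ hτ hzv
  have hsettled :
      settled ⟨z :: vk :: rest, insert z R, σ, τ⟩ = settled ⟨vk :: rest, R, σ, τ⟩ := by
    ext x
    by_cases hxz : x = z
    · simp [hxz, hzR]
    · simp [hxz]
  refine ⟨List.isChain_cons_cons.mpr ⟨hadj, h.isChain⟩, List.nodup_cons.mpr ⟨hz, h.nodup⟩,
    ?_, fun u hu => Set.mem_insert_of_mem _ (h.support_subset u hu), ?_, ?_, ?_⟩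
  · rintro x (_ | ⟨_, hx⟩)
    exacts [Set.mem_insert _ _, Set.mem_insert_of_mem _ (h.path_subset x hx)]
  · rw [hsettled]
    exact h.exists_isMatched
  · rw [hsettled]
    exact h.sigma_eq_some
  · rw [hsettled]
    exact fun v hv hσv u hvu hu =>
      h.sigma_eq_none v hv hσv u hvu (List.not_mem_of_not_mem_cons hu)

lemma Invariant.introPair {vk z w : W} {rest : List W} {R : Set W} {σ τ : W → Option W}
    (h : Invariant G' ⟨vk :: rest, R, σ, τ⟩) (hz : z ∉ vk :: rest) (hadj : G'.Adj z vk)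
    (hσ : σ z = none) (hτ : τ z = some w) :
    Invariant G' ⟨w :: z :: vk :: rest, insert z R, σ, τ⟩ := by
  set S : AlgState W := ⟨vk :: rest, R, σ, τ⟩
  have hzS : z ∈ S.settled := ⟨h.support_subset z (Or.inr (by simp [S, hτ])), hz⟩
  obtain ⟨w', hwS, hzw⟩ := h.exists_isMatched z hzS
  obtain rfl : w = w' := (hzw.eq_of_tau_eq_some hτ).symm
  have hσw : σ w = some z := hzw.symm.sigma_eq_some hσ
  have hwz : G'.Adj w z := (h.sigma_eq_some w hwS z hσw).1
  have hsettled : ∀ x, x ∈ settled ⟨w :: z :: vk :: rest, insert z R, σ, τ⟩ ↔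
      x ∈ S.settled ∧ x ≠ w ∧ x ≠ z := by
    intro x
    simp only [mem_settled, S, Set.mem_insert_iff, List.mem_cons]
    tauto
  have partner_ne : ∀ {u v}, IsMatched σ τ u v → u ≠ w → u ≠ z → v ≠ w ∧ v ≠ z := by
    refine fun huv huw huz => ⟨?_, ?_⟩ <;> rintro rfl
    exacts [huz (huv.symm.unique hzw.symm), huw (huv.symm.unique hzw)]
  refine ⟨List.isChain_cons_cons.mpr ⟨hwz, List.isChain_cons_cons.mpr ⟨hadj, h.isChain⟩⟩,
    List.nodup_cons.mpr ⟨?_, List.nodup_cons.mpr ⟨hz, h.nodup⟩⟩, ?_,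
    fun u hu => Set.mem_insert_of_mem _ (h.support_subset u hu), ?_, ?_, ?_⟩
  · exact List.not_mem_cons_of_ne_of_not_mem hwz.ne hwS.2
  · rintro x (_ | ⟨_, _ | ⟨_, hx⟩⟩)
    exacts [Set.mem_insert_of_mem _ hwS.1, Set.mem_insert _ _,
      Set.mem_insert_of_mem _ (h.path_subset x hx)]
  · simp only [hsettled]
    rintro u ⟨huS, huw, huz⟩
    obtain ⟨v, hvS, huv⟩ := h.exists_isMatched u huS
    exact ⟨v, ⟨hvS, partner_ne huv huw huz⟩, huv⟩
  · simp only [hsettled]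
    rintro v ⟨hvS, hvw, hvz⟩ u hσv
    obtain ⟨hvu, huS, hσu⟩ := h.sigma_eq_some v hvS u hσv
    obtain ⟨v', -, hvv'⟩ := h.exists_isMatched v hvS
    obtain rfl : v' = u := hvv'.eq_of_sigma_eq_some hσv
    exact ⟨hvu, ⟨huS, partner_ne hvv' hvw hvz⟩, hσu⟩
  · simp only [hsettled, List.mem_cons, not_or]
    rintro v ⟨hvS, -, -⟩ hσv u hvu ⟨huw, huz, hu⟩
    obtain ⟨huS, hσu⟩ :=
      h.sigma_eq_none v hvS hσv u hvu (List.not_mem_cons_of_ne_of_not_mem hu.1 hu.2)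
    exact ⟨⟨huS, huw, huz⟩, hσu⟩

lemma mem_settled_pop_iff {a b x : W} {rest : List W} {R : Set W} {σ τ σ' τ' : W → Option W}
    (ha : a ∈ R) (hb : b ∈ R) (hnodup : (a :: b :: rest).Nodup) :
    x ∈ settled ⟨rest, R, σ', τ'⟩ ↔ x = a ∨ x = b ∨ x ∈ settled ⟨a :: b :: rest, R, σ, τ⟩ := by
  simp only [List.nodup_cons, List.mem_cons, not_or] at hnodup
  simp only [mem_settled, List.mem_cons, not_or]
  constructor
  · tauto
  · rintro (rfl | rfl | ⟨hxR, -, -, hx⟩)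
    exacts [⟨ha, hnodup.1.2⟩, ⟨hb, hnodup.2.1⟩, ⟨hxR, hx⟩]

lemma ne_and_ne_of_mem_settled {a b x : W} {rest : List W} {R : Set W} {σ τ : W → Option W}
    (hx : x ∈ settled ⟨a :: b :: rest, R, σ, τ⟩) : x ≠ a ∧ x ≠ b := by
  simp only [mem_settled, List.mem_cons, not_or] at hx
  exact ⟨hx.2.1, hx.2.2.1⟩

section Pop

variable {vk vk1 : W} {rest : List W} {R : Set W} {σ τ σ' τ' : W → Option W}

lemma Invariant.pop_sigma_eq_none (h : Invariant G' ⟨vk :: vk1 :: rest, R, σ, τ⟩)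
    (hZ : ∀ u, u ∉ vk :: vk1 :: rest → G'.Adj u vk → σ u ≠ none)
    (hσ' : ∀ x, x ≠ vk → x ≠ vk1 → σ' x = σ x) (hmatch : IsMatchPair σ' τ' vk1 vk) :
    ∀ v ∈ settled ⟨rest, R, σ', τ'⟩, σ' v = none → ∀ u, G'.Adj v u → u ∉ rest →
      u ∈ settled ⟨rest, R, σ', τ'⟩ ∧ σ' u ≠ none := by
  intro v hv hσv u hvu hu
  have hsettled := fun x => mem_settled_pop_iff (σ := σ) (τ := τ) (σ' := σ') (τ' := τ') (x := x)
    (h.path_subset vk (by simp)) (h.path_subset vk1 (by simp)) h.nodup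
  simp only [hsettled] at hv ⊢
  have hvvk1 : v ≠ vk1 := by rintro rfl; simp [hmatch.1] at hσv
  by_cases huvk1 : u = vk1
  · rw [huvk1, hmatch.1]
    exact ⟨Or.inr (Or.inl rfl), Option.some_ne_none _⟩
  -- `u = vk` would make `v` a settled unmatched neighbour of `vk`, excluded by `hZ`
  by_cases huvk : u = vk
  · rw [huvk] at hvu
    have hvS := (hv.resolve_left hvu.ne).resolve_left hvvk1
    obtain ⟨hv1, hv2⟩ := ne_and_ne_of_mem_settled hvS
    exact absurd (by rwa [hσ' v hv1 hv2] at hσv) (hZ v hvS.2 hvu)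
  have huP : u ∉ vk :: vk1 :: rest := by simp [huvk, huvk1, hu]
  rw [hσ' u huvk huvk1]
  rcases hv with rfl | rfl | hvS
  · have hσu := hZ u huP hvu.symm
    exact ⟨Or.inr (Or.inr ⟨h.support_subset u (Or.inl hσu), huP⟩), hσu⟩
  · exact absurd rfl hvvk1
  · obtain ⟨hv1, hv2⟩ := ne_and_ne_of_mem_settled hvS
    rw [hσ' v hv1 hv2] at hσv
    obtain ⟨huS, hσu⟩ := h.sigma_eq_none v hvS hσv u hvu huP
    exact ⟨Or.inr (Or.inr huS), hσu⟩

lemma Invariant.pop (h : Invariant G' ⟨vk :: vk1 :: rest, R, σ, τ⟩)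
    (hZ : ∀ u, u ∉ vk :: vk1 :: rest → G'.Adj u vk → σ u ≠ none)
    (hσ' : ∀ x, x ≠ vk → x ≠ vk1 → σ' x = σ x) (hτ' : ∀ x, x ≠ vk → x ≠ vk1 → τ' x = τ x)
    (hmatch : IsMatchPair σ' τ' vk1 vk) : Invariant G' ⟨rest, R, σ', τ'⟩ := by
  have hvkR : vk ∈ R := h.path_subset vk (by simp)
  have hvk1R : vk1 ∈ R := h.path_subset vk1 (by simp)
  have hsettled := fun x => mem_settled_pop_iff (σ := σ) (τ := τ) (σ' := σ') (τ' := τ') (x := x)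
    hvkR hvk1R h.nodup
  refine ⟨h.isChain.tail.tail, h.nodup.of_cons.of_cons,
    fun x hx => h.path_subset x (by simp [hx]), ?_, ?_, ?_, h.pop_sigma_eq_none hZ hσ' hmatch⟩
  · intro u (hu : σ' u ≠ none ∨ τ' u ≠ none)
    by_cases huvk : u = vk
    · exact huvk ▸ hvkR
    by_cases huvk1 : u = vk1
    · exact huvk1 ▸ hvk1R
    rw [hσ' u huvk huvk1, hτ' u huvk huvk1] at hu
    exact h.support_subset u hu
  · simp only [hsettled]
    rintro u (rfl | rfl | huS)
    · exact ⟨vk1, Or.inr (Or.inl rfl), Or.inr hmatch⟩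
    · exact ⟨vk, Or.inl rfl, Or.inl hmatch⟩
    · obtain ⟨v, hvS, huv⟩ := h.exists_isMatched u huS
      obtain ⟨hu1, hu2⟩ := ne_and_ne_of_mem_settled huS
      obtain ⟨hv1, hv2⟩ := ne_and_ne_of_mem_settled hvS
      exact ⟨v, Or.inr (Or.inr hvS),
        huv.congr (hσ' u hu1 hu2) (hσ' v hv1 hv2) (hτ' u hu1 hu2) (hτ' v hv1 hv2)⟩
  · simp only [hsettled]
    rintro v (rfl | rfl | hvS) u hσv
    · simp [hmatch.2.2.1] at hσv
    · obtain rfl : vk = u := Option.some_injective _ (hmatch.1.symm.trans hσv)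
      exact ⟨(List.isChain_cons_cons.mp h.isChain).1.symm, Or.inl rfl, hmatch.2.2.1⟩
    · obtain ⟨hv1, hv2⟩ := ne_and_ne_of_mem_settled hvS
      rw [hσ' v hv1 hv2] at hσv
      obtain ⟨hvu, huS, hσu⟩ := h.sigma_eq_some v hvS u hσv
      obtain ⟨hu1, hu2⟩ := ne_and_ne_of_mem_settled huS
      exact ⟨hvu, Or.inr (Or.inr huS), (hσ' u hu1 hu2).trans hσu⟩

end Pop

lemma Invariant.del [DecidableEq W] {vk vk1 : W} {rest : List W} {R : Set W}
    {σ τ : W → Option W} (h : Invariant G' ⟨vk :: vk1 :: rest, R, σ, τ⟩)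
    (hZ : ∀ u, u ∉ vk :: vk1 :: rest → G'.Adj u vk → σ u ≠ none) :
    Invariant G' ⟨rest, R, Function.update (Function.update σ vk1 (some vk)) vk none,
      Function.update (Function.update τ vk (some vk1)) vk1 none⟩ := by
  have hne : vk1 ≠ vk := (List.isChain_cons_cons.mp h.isChain).1.ne.symm
  refine h.pop hZ (fun x hxvk hxvk1 => by simp [hxvk, hxvk1])
    (fun x hxvk hxvk1 => by simp [hxvk, hxvk1]) ⟨?_, ?_, ?_, ?_⟩ <;> simp [hne, hne.symm]

lemma Invariant.step [DecidableEq W] {S S' : AlgState W} (h : Invariant G' S)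
    (hS : Step G' S S') : Invariant G' S' := by
  obtain ⟨_, hS⟩ := hS
  cases hS with
  | del _ _ _ _ _ _ hZ => exact h.del hZ
  | intro_bot _ _ _ _ _ _ _ hz hadj hσ hτ => exact h.introBot hz hadj hσ hτ
  | intro_pair _ _ _ _ _ _ _ _ hz hadj hσ hτ => exact h.introPair hz hadj hσ hτ

lemma Invariant.of_reflTransGen [DecidableEq W] {x0 x1 : W} {S : AlgState W}
    (hadj : G'.Adj x1 x0) (hS : Relation.ReflTransGen (Step G') (initState x0 x1) S) :
    Invariant G' S := by
  induction hS with
  | refl => exact invariant_initState hadj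
  | tail _ hstep ih => exact ih.step hstep

end AlgState

theorem stmt5_general {V : Type} [DecidableEq V] (G : SimpleGraph V) (V1 : Set V)
    (S : AlgState (Vext V))
    (hreach : Relation.ReflTransGen (Step (extGraph G V1)) (initState vzero vone) S) :
    (S.P.Chain' (extGraph G V1).Adj ∧ S.P.Nodup ∧ ∀ x ∈ S.P, x ∈ S.R) ∧
    ValidTuple S.σ S.τ (S.R \ {x | x ∈ S.P}) S.R ∧
    (∀ v ∈ S.R \ {x | x ∈ S.P}, ∀ u, S.σ v = some u →
      (extGraph G V1).Adj v u ∧ u ∈ S.R \ {x | x ∈ S.P} ∧ S.σ u = none) ∧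
    (∀ v ∈ S.R \ {x | x ∈ S.P}, S.σ v = none →
      ∀ u, (extGraph G V1).Adj v u → u ∉ S.P →
        u ∈ S.R \ {x | x ∈ S.P} ∧ S.σ u ≠ none) := by
  have h : AlgState.Invariant (extGraph G V1) S :=
    AlgState.Invariant.of_reflTransGen (x0 := vzero) (x1 := vone) trivial hreach
  exact ⟨⟨h.isChain, h.nodup, h.path_subset⟩,
    validTuple_of_forall_isMatched h.support_subset h.exists_isMatched,
    h.sigma_eq_some, h.sigma_eq_none⟩

/-- Lemma 1: the four invariants of the algorithm.  For any state
`(P^s, R^s, σ^s, τ^s)` reached from the initial state after finitely many steps,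
with `Q^s = R^s − V(P^s)`: (a) `P^s` is a path in `G'` with `V(P^s) ⊆ R^s`;
(b) `(σ^s, τ^s)` is a valid tuple for `(Q^s, R^s)`; (c) for `v ∈ Q^s`, if
`σ^s(v) = u ∈ V'` then `u ∈ N_{G'}(v) ∩ Q^s` and `σ^s(u) = ⊥`; (d) for `v ∈ Q^s`, if
`σ^s(v) = ⊥` then every `u ∈ N_{G'}(v) − V(P^s)` satisfies `u ∈ Q^s` and
`σ^s(u) ≠ ⊥`. -/
theorem stmt5 {V : Type} [Fintype V] [DecidableEq V] (G : SimpleGraph V) (V1 V2 : Set V)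
    (hcover : V1 ∪ V2 = Set.univ) (hdisj : Disjoint V1 V2)
    (hbip : ∀ ⦃u w : V⦄, G.Adj u w → (u ∈ V1 ∧ w ∈ V2) ∨ (u ∈ V2 ∧ w ∈ V1))
    (S : AlgState (Vext V))
    (hreach : Relation.ReflTransGen (Step (extGraph G V1)) (initState vzero vone) S) :
    (S.P.Chain' (extGraph G V1).Adj ∧ S.P.Nodup ∧ ∀ x ∈ S.P, x ∈ S.R) ∧
    ValidTuple S.σ S.τ (S.R \ {x | x ∈ S.P}) S.R ∧
    (∀ v ∈ S.R \ {x | x ∈ S.P}, ∀ u, S.σ v = some u →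
      (extGraph G V1).Adj v u ∧ u ∈ S.R \ {x | x ∈ S.P} ∧ S.σ u = none) ∧
    (∀ v ∈ S.R \ {x | x ∈ S.P}, S.σ v = none →
      ∀ u, (extGraph G V1).Adj v u → u ∉ S.P →
        u ∈ S.R \ {x | x ∈ S.P} ∧ S.σ u ≠ none) :=
  stmt5_general G V1 S hreach
end
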